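/- arXiv:1501.00426 — 4 statements merged into one kernel-verified Lean document; each statement's English description precedes it below -/
import Mathlib

section
/- If a meromorphic-type fraction has two representations h(ℓ_1,...,ℓ_m)/(L_1^{s_1} ⋯ L_n^{s_n}) = g(ℓ'_1,...,ℓ'_j)/((L'_1)^{t_1} ⋯ (L'_p)^{t_p}) where h, g are holomorphic germs at zero nonvanishing at zero, the families {ℓ_1,...,ℓ_m,L_1,...,L_n} and {ℓ'_1,...,ℓ'_j,L'_1,...,L'_p} are each linearly independent, and no L_i is proportional to another L_k (similarly for L'), then n = p, and after reordering, each L_i is a nonzero scalar multiple of L'_i with s_i = t_i. -/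
open Filter Finset Set Topology

/-! Clearing denominators, `h(ℓ) ∏ L'^t = g(ℓ') ∏ L^s` holds on a neighbourhood of `0`: first off
the hyperplanes `L_i = 0`, `L'_σ = 0`, then everywhere by density and continuity. At a point of
`ker L_i` near `0` avoiding all other hyperplanes the right side vanishes, so some `L'_σ` vanishes
there as well; hence `ker L_i ≤ ker L'_σ` and `L_i` is proportional to `L'_σ`. Non-proportionality
within each family makes this matching a bijection. Finally, on a line `z ↦ x₀ + z • w` through
such a generic point `x₀ ∈ ker L_i`, the two sides vanish at `z = 0` to the exact orders `t_σ` and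
`s_i`. -/

theorem LinearMap.exists_eq_smul_of_ker_le {K E : Type*} [Field K] [AddCommGroup E] [Module K E]
    {f g : E →ₗ[K] K} (h : LinearMap.ker f ≤ LinearMap.ker g) : ∃ c : K, g = c • f := by
  have hg := mem_span_of_iInf_ker_le_ker (L := fun _ : Unit => f) (by simpa using h)
  rw [Set.range_const, Submodule.mem_span_singleton] at hg
  obtain ⟨c, hc⟩ := hg
  exact ⟨c, hc.symm⟩

section Matching

variable {K M ι ι' : Type*} [Field K] [AddCommGroup M] [Module K M]

theorem injective_of_eq_smul {v : ι → M} {v' : ι' → M} (hv' : ∀ j, v' j ≠ 0)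
    (hv : ∀ i i', i ≠ i' → ∀ d : K, v i ≠ d • v i') {τ : ι → ι'} {c : ι → K}
    (hτ : ∀ i, v' (τ i) = c i • v i) : Function.Injective τ := by
  intro a b hab
  by_contra hne
  have hca : c a ≠ 0 := fun h0 => hv' (τ a) (by rw [hτ a, h0, zero_smul])
  refine hv a b hne ((c a)⁻¹ * c b) ?_
  rw [mul_smul, ← hτ b, ← hab, hτ a, smul_smul, inv_mul_cancel₀ hca, one_smul]

theorem exists_equiv_forall_eq_smul [Finite ι] [Finite ι'] {v : ι → M} {v' : ι' → M}
    (hv : ∀ i, v i ≠ 0) (hv' : ∀ j, v' j ≠ 0)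
    (hprop : ∀ i i', i ≠ i' → ∀ d : K, v i ≠ d • v i')
    (hprop' : ∀ j j', j ≠ j' → ∀ d : K, v' j ≠ d • v' j')
    (h : ∀ i, ∃ j, ∃ c : K, v' j = c • v i) (h' : ∀ j, ∃ i, ∃ c : K, v i = c • v' j) :
    ∃ e : ι ≃ ι', ∀ i, ∃ c : K, c ≠ 0 ∧ v i = c • v' (e i) := by
  choose τ c hτ using h
  choose τ' c' hτ' using h'
  have hτinj := injective_of_eq_smul hv' hprop hτ
  have hτbij := hτinj.bijective_of_nat_card_le
    (Nat.card_le_card_of_injective τ' (injective_of_eq_smul hv hprop' hτ'))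
  have hc : ∀ i, c i ≠ 0 := fun i h0 => hv' (τ i) (by rw [hτ i, h0, zero_smul])
  refine ⟨Equiv.ofBijective τ hτbij, fun i => ⟨(c i)⁻¹, inv_ne_zero (hc i), ?_⟩⟩
  rw [Equiv.ofBijective_apply, hτ i, smul_smul, inv_mul_cancel₀ (hc i), one_smul]

end Matching

section Order

variable {𝕜 : Type*} [NontriviallyNormedField 𝕜]

theorem eq_zero_of_eventually_mul_pow_eq {A B : 𝕜 → 𝕜} (hA : ContinuousAt A 0)
    (hB : ContinuousAt B 0) {s t : ℕ} (hst : s < t)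
    (h : ∀ᶠ z in 𝓝 0, A z * z ^ t = B z * z ^ s) : B 0 = 0 := by
  have hBA : B =ᶠ[𝓝[≠] 0] fun z => A z * z ^ (t - s) := by
    filter_upwards [nhdsWithin_le_nhds h, self_mem_nhdsWithin] with z hz hz0
    refine mul_right_cancel₀ (pow_ne_zero s hz0) ?_
    rw [mul_assoc, ← pow_add, Nat.sub_add_cancel hst.le, hz]
  have hlim : Tendsto (fun z => A z * z ^ (t - s)) (𝓝[≠] 0) (𝓝 (A 0 * 0 ^ (t - s))) :=
    (hA.mul (continuous_pow _).continuousAt).tendsto.mono_left nhdsWithin_le_nhds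
  rw [zero_pow (Nat.sub_ne_zero_of_lt hst), mul_zero] at hlim
  exact tendsto_nhds_unique (hB.tendsto.mono_left nhdsWithin_le_nhds) (hlim.congr' hBA.symm)

theorem eq_of_eventually_mul_pow_eq {A B : 𝕜 → 𝕜} (hA : ContinuousAt A 0)
    (hB : ContinuousAt B 0) (hA0 : A 0 ≠ 0) (hB0 : B 0 ≠ 0) {s t : ℕ}
    (h : ∀ᶠ z in 𝓝 0, A z * z ^ t = B z * z ^ s) : s = t := by
  rcases lt_trichotomy s t with hst | hst | hst
  · exact absurd (eq_zero_of_eventually_mul_pow_eq hA hB hst h) hB0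
  · exact hst
  · exact absurd (eq_zero_of_eventually_mul_pow_eq hB hA hst (h.mono fun z hz => hz.symm)) hA0

end Order

section Forms

variable {𝕜 E : Type*} [NontriviallyNormedField 𝕜] [CompleteSpace 𝕜]
  [NormedAddCommGroup E] [NormedSpace 𝕜 E] [FiniteDimensional 𝕜 E]

omit [CompleteSpace 𝕜] [FiniteDimensional 𝕜 E] in
theorem dense_setOf_apply_ne_zero {f : E →ₗ[𝕜] 𝕜} (hf : f ≠ 0) : Dense {x | f x ≠ 0} := by
  have hcompl : {x | f x ≠ 0} = ((LinearMap.ker f : Set E))ᶜ := by ext; simp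
  rw [hcompl, ← interior_eq_empty_iff_dense_compl, ← Set.not_nonempty_iff_eq_empty]
  exact fun hne => hf (LinearMap.ker_eq_top.mp (Submodule.eq_top_of_nonempty_interior' _ hne))

theorem dense_setOf_forall_apply_ne_zero {ι : Type*} [Finite ι] {f : ι → E →ₗ[𝕜] 𝕜}
    (hf : ∀ i, f i ≠ 0) : Dense {x | ∀ i, f i x ≠ 0} := by
  have := FiniteDimensional.complete 𝕜 E
  simpa only [Set.ofPred_forall] using dense_iInter_of_isOpen
    (fun i => isOpen_ne_fun (f i).continuous_of_finiteDimensional continuous_const)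
    (fun i => dense_setOf_apply_ne_zero (hf i))

theorem Filter.Eventually.exists_mem_ker_forall_apply_ne_zero {ι : Type*} [Finite ι]
    {f : E →ₗ[𝕜] 𝕜} {g : ι → E →ₗ[𝕜] 𝕜} (hg : ∀ i (c : 𝕜), g i ≠ c • f)
    {P : E → Prop} (hP : ∀ᶠ x in 𝓝 0, P x) :
    ∃ x, P x ∧ f x = 0 ∧ ∀ i, g i x ≠ 0 := by
  have hres : ∀ i, (g i).comp (LinearMap.ker f).subtype ≠ 0 := fun i h0 => by
    obtain ⟨c, hc⟩ := LinearMap.exists_eq_smul_of_ker_le (f := f) (g := g i)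
      fun x hx => by simpa using LinearMap.congr_fun h0 ⟨x, hx⟩
    exact hg i c hc
  have hPW : ∀ᶠ w : LinearMap.ker f in 𝓝 0, P w :=
    continuous_subtype_val.continuousAt.eventually (by simpa using hP)
  obtain ⟨w, hw, hPw⟩ := (dense_setOf_forall_apply_ne_zero hres).inter_nhds_nonempty hPW
  exact ⟨w, hPw, w.2, hw⟩

theorem AnalyticAt.eventually_continuousAt_comp_and_ne_zero {F : Type*} [NormedAddCommGroup F]
    [NormedSpace 𝕜 F] {h : F → 𝕜} (hh : AnalyticAt 𝕜 h 0) (hh0 : h 0 ≠ 0) (f : E →ₗ[𝕜] F) :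
    ∀ᶠ x in 𝓝 0, ContinuousAt (fun y => h (f y)) x ∧ h (f x) ≠ 0 := by
  have hf := f.continuous_of_finiteDimensional
  refine ((hf.tendsto' 0 0 (map_zero f)).eventually
    (hh.eventually_analyticAt.and (hh.continuousAt.eventually_ne hh0))).mono fun x hx => ?_
  exact ⟨hx.1.continuousAt.comp hf.continuousAt, hx.2⟩

variable {ι ι' : Type*} [Fintype ι] [Fintype ι']

theorem eventually_mul_prod_pow_eq_of_div_eq {L : ι → E →ₗ[𝕜] 𝕜} {L' : ι' → E →ₗ[𝕜] 𝕜}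
    {s : ι → ℕ} {t : ι' → ℕ} {φ ψ : E → 𝕜} (hL : ∀ i, L i ≠ 0) (hL' : ∀ j, L' j ≠ 0)
    (hφ : ∀ᶠ x in 𝓝 0, ContinuousAt φ x) (hψ : ∀ᶠ x in 𝓝 0, ContinuousAt ψ x)
    (heq : ∀ᶠ x in 𝓝 0, ((∀ i, L i x ≠ 0) ∧ (∀ j, L' j x ≠ 0)) →
      φ x / ∏ i, L i x ^ s i = ψ x / ∏ j, L' j x ^ t j) :
    ∀ᶠ x in 𝓝 0, φ x * ∏ j, L' j x ^ t j = ψ x * ∏ i, L i x ^ s i := by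
  obtain ⟨U, hU, hUo, hU0⟩ := eventually_nhds_iff.mp (hφ.and (hψ.and heq))
  have hLc : ∀ i, Continuous (L i) := fun i => (L i).continuous_of_finiteDimensional
  have hL'c : ∀ j, Continuous (L' j) := fun j => (L' j).continuous_of_finiteDimensional
  have hD := dense_setOf_forall_apply_ne_zero (f := Sum.elim L L') (Sum.forall.2 ⟨hL, hL'⟩)
  have hEqOn : EqOn (fun x => φ x * ∏ j, L' j x ^ t j) (fun x => ψ x * ∏ i, L i x ^ s i) U := by
    refine EqOn.of_subset_closure (s := U ∩ {x | ∀ q, Sum.elim L L' q x ≠ 0}) ?_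
      (fun x hx => ((hU x hx).1.mul (by fun_prop)).continuousWithinAt)
      (fun x hx => ((hU x hx).2.1.mul (by fun_prop)).continuousWithinAt)
      inter_subset_left (hD.open_subset_closure_inter hUo)
    rintro x ⟨hxU, hxD⟩
    have hLx : ∀ i, L i x ≠ 0 := fun i => hxD (.inl i)
    have hL'x : ∀ j, L' j x ≠ 0 := fun j => hxD (.inr j)
    have hdiv := (hU x hxU).2.2 ⟨hLx, hL'x⟩
    rwa [div_eq_div_iff (prod_ne_zero_iff.mpr fun i _ => pow_ne_zero _ (hLx i))
      (prod_ne_zero_iff.mpr fun j _ => pow_ne_zero _ (hL'x j))] at hdiv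
  exact eventually_nhds_iff.mpr ⟨U, hEqOn, hUo, hU0⟩

theorem exists_eq_smul_of_eventually_mul_prod_pow_eq {L : ι → E →ₗ[𝕜] 𝕜}
    {L' : ι' → E →ₗ[𝕜] 𝕜} {s : ι → ℕ} {t : ι' → ℕ} {φ ψ : E → 𝕜}
    (hφ : ∀ᶠ x in 𝓝 0, φ x ≠ 0)
    (hEq : ∀ᶠ x in 𝓝 0, φ x * ∏ j, L' j x ^ t j = ψ x * ∏ i, L i x ^ s i)
    {i : ι} (hsi : s i ≠ 0) : ∃ j, ∃ c : 𝕜, L' j = c • L i := by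
  by_contra! hno
  obtain ⟨x, ⟨hφx, hx⟩, hLx, hL'x⟩ := (hφ.and hEq).exists_mem_ker_forall_apply_ne_zero hno
  rw [prod_eq_zero (mem_univ i) (by simp [hLx, hsi]), mul_zero] at hx
  exact mul_ne_zero hφx (prod_ne_zero_iff.mpr fun j _ => pow_ne_zero _ (hL'x j)) hx

theorem exists_prod_pow_add_smul_eq_mul_pow (L : ι → E →ₗ[𝕜] 𝕜) (s : ι → ℕ) {i : ι}
    {x₀ w : E} (hx₀ : L i x₀ = 0) (hx₀' : ∀ k, k ≠ i → L k x₀ ≠ 0) (hw : L i w ≠ 0) :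
    ∃ C : 𝕜 → 𝕜, ContinuousAt C 0 ∧ C 0 ≠ 0 ∧
      ∀ z, ∏ k, L k (x₀ + z • w) ^ s k = C z * z ^ s i := by
  classical
  have hLc : ∀ k, Continuous (L k) := fun k => (L k).continuous_of_finiteDimensional
  refine ⟨fun z => L i w ^ s i * ∏ k ∈ univ.erase i, L k (x₀ + z • w) ^ s k,
    by fun_prop, ?_, fun z => ?_⟩
  · simp only [zero_smul, add_zero]
    exact mul_ne_zero (pow_ne_zero _ hw)
      (prod_ne_zero_iff.mpr fun k hk => pow_ne_zero _ (hx₀' k (ne_of_mem_erase hk)))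
  · rw [← mul_prod_erase univ _ (mem_univ i)]
    simp only [map_add, map_smul, hx₀, smul_eq_mul, zero_add, mul_pow]
    ring

theorem eq_of_eventually_mul_prod_pow_eq {L : ι → E →ₗ[𝕜] 𝕜} {L' : ι' → E →ₗ[𝕜] 𝕜}
    {s : ι → ℕ} {t : ι' → ℕ} {φ ψ : E → 𝕜}
    (hφ : ∀ᶠ x in 𝓝 0, ContinuousAt φ x ∧ φ x ≠ 0)
    (hψ : ∀ᶠ x in 𝓝 0, ContinuousAt ψ x ∧ ψ x ≠ 0)
    (hEq : ∀ᶠ x in 𝓝 0, φ x * ∏ j, L' j x ^ t j = ψ x * ∏ i, L i x ^ s i)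
    {i : ι} {j : ι'} (hLi : L i ≠ 0) {c : 𝕜} (hc : c ≠ 0) (hLL' : L i = c • L' j)
    (hL : ∀ k, k ≠ i → ∀ d : 𝕜, L k ≠ d • L i) (hL' : ∀ k, k ≠ j → ∀ d : 𝕜, L' k ≠ d • L i) :
    s i = t j := by
  obtain ⟨x₀, ⟨⟨hφc, hφ0⟩, ⟨hψc, hψ0⟩, hEq₀⟩, hx₀, hx₀'⟩ :=
    (hφ.and (hψ.and hEq.eventually_nhds)).exists_mem_ker_forall_apply_ne_zero
      (g := Sum.elim (fun k : {k // k ≠ i} => L k) (fun k : {k // k ≠ j} => L' k))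
      (by rintro (⟨k, hk⟩ | ⟨k, hk⟩) d; exacts [hL k hk d, hL' k hk d])
  obtain ⟨w, hw⟩ : ∃ w, L i w ≠ 0 := by simpa using DFunLike.ne_iff.mp hLi
  obtain ⟨C, hCc, hC0, hC⟩ := exists_prod_pow_add_smul_eq_mul_pow L s hx₀
    (fun k hk => hx₀' (.inl ⟨k, hk⟩)) hw
  obtain ⟨C', hC'c, hC'0, hC'⟩ := exists_prod_pow_add_smul_eq_mul_pow L' t (i := j) (w := w)
    (by simpa [hLL', hc] using hx₀) (fun k hk => hx₀' (.inr ⟨k, hk⟩))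
    (fun h0 => hw (by simp [hLL', h0]))
  have hline : Continuous fun z : 𝕜 => x₀ + z • w := by fun_prop
  refine eq_of_eventually_mul_pow_eq (A := fun z => φ (x₀ + z • w) * C' z)
    (B := fun z => ψ (x₀ + z • w) * C z) ((hφc.comp_of_eq hline.continuousAt (by simp)).mul hC'c)
    ((hψc.comp_of_eq hline.continuousAt (by simp)).mul hCc) (by simp [hφ0, hC'0])
    (by simp [hψ0, hC0]) ?_
  filter_upwards [(hline.tendsto' 0 x₀ (by simp)).eventually hEq₀] with z hz
  rw [mul_assoc, ← hC', mul_assoc, ← hC]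
  exact hz

end Forms

/-- Uniqueness of the representation of a polar-type fraction: if
`h(ℓ_1,…,ℓ_m)/(L_1^{s_1} ⋯ L_n^{s_n}) = g(ℓ'_1,…,ℓ'_j)/((L'_1)^{t_1} ⋯ (L'_p)^{t_p})`
as meromorphic germs at `0`, with `h, g` holomorphic germs at zero nonvanishing at zero,
each family `{ℓ, L}` and `{ℓ', L'}` linearly independent, and no two `L`'s (resp. `L'`'s)
proportional, then `n = p` and after reordering each `L_i` is a nonzero scalar multiple
of `L'_i` with `s_i = t_i`. -/
theorem stmt1 (k m j n p : ℕ)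
    (h : (Fin m → ℂ) → ℂ) (g : (Fin j → ℂ) → ℂ)
    (hh : AnalyticAt ℂ h 0) (hg : AnalyticAt ℂ g 0)
    (hh0 : h 0 ≠ 0) (hg0 : g 0 ≠ 0)
    (ell : Fin m → (Fin k → ℂ) →ₗ[ℂ] ℂ) (L : Fin n → (Fin k → ℂ) →ₗ[ℂ] ℂ)
    (ell' : Fin j → (Fin k → ℂ) →ₗ[ℂ] ℂ) (L' : Fin p → (Fin k → ℂ) →ₗ[ℂ] ℂ)
    (s : Fin n → ℕ) (t : Fin p → ℕ) (hs : ∀ i, 1 ≤ s i) (ht : ∀ i, 1 ≤ t i)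
    (hind1 : LinearIndependent ℂ (Sum.elim ell L))
    (hind2 : LinearIndependent ℂ (Sum.elim ell' L'))
    (hprop1 : ∀ i i' : Fin n, i ≠ i' → ∀ c : ℂ, L i ≠ c • L i')
    (hprop2 : ∀ i i' : Fin p, i ≠ i' → ∀ c : ℂ, L' i ≠ c • L' i')
    (heq : ∀ᶠ x in nhds (0 : Fin k → ℂ),
      ((∀ i, L i x ≠ 0) ∧ (∀ i, L' i x ≠ 0)) →
        h (fun a => ell a x) / ∏ i, (L i x) ^ s i
          = g (fun a => ell' a x) / ∏ i, (L' i x) ^ t i) :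
    n = p ∧ ∃ σ : Fin n ≃ Fin p, ∀ i,
      s i = t (σ i) ∧ ∃ c : ℂ, c ≠ 0 ∧ L i = c • L' (σ i) := by
  have hL : ∀ i, L i ≠ 0 := fun i => hind1.ne_zero (Sum.inr i)
  have hL' : ∀ i, L' i ≠ 0 := fun i => hind2.ne_zero (Sum.inr i)
  have hφ := hh.eventually_continuousAt_comp_and_ne_zero hh0 (LinearMap.pi ell)
  have hψ := hg.eventually_continuousAt_comp_and_ne_zero hg0 (LinearMap.pi ell')
  have hEq := eventually_mul_prod_pow_eq_of_div_eq hL hL' (hφ.mono fun _ hx => hx.1)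
    (hψ.mono fun _ hx => hx.1) heq
  obtain ⟨σ, hσ⟩ := exists_equiv_forall_eq_smul hL hL' hprop1 hprop2
    (fun i => exists_eq_smul_of_eventually_mul_prod_pow_eq (hφ.mono fun _ hx => hx.2) hEq
      (Nat.one_le_iff_ne_zero.mp (hs i)))
    (fun i => exists_eq_smul_of_eventually_mul_prod_pow_eq (hψ.mono fun _ hx => hx.2)
      (hEq.mono fun _ hx => hx.symm) (Nat.one_le_iff_ne_zero.mp (ht i)))
  refine ⟨by simpa using Fintype.card_congr σ, σ, fun i => ?_⟩
  obtain ⟨c, hc, hLc⟩ := hσ i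
  refine ⟨eq_of_eventually_mul_prod_pow_eq hφ hψ hEq (hL i) hc hLc
    (fun k hk d => hprop1 k i hk d) (fun k hk d hd => ?_), c, hc, hLc⟩
  exact hprop2 k (σ i) hk (d * c) (by rw [hd, hLc, smul_smul])
end

section
/- Any fraction 1/(L_1^{s_1} ⋯ L_n^{s_n}) with L_1, ..., L_n nonzero vectors in an 𝔽-vector space (viewed as linear forms) and positive integer exponents s_i can be written as a finite 𝔽-linear combination Σ_i a_i/(M_{i1}^{t_{i1}} ⋯ M_{in_i}^{t_{in_i}}) where each {M_{i1}, ..., M_{in_i}} is a linearly independent subset of {L_1, ..., L_n} and the t_{ij} are positive integers. -/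
open Finset

/-!
If the forms dividing `∏ Lᵢ^{sᵢ}` are linearly dependent, a relation `∑ cₖ Lₖ = 0` with
`cⱼ ≠ 0` gives `1 = ∑_{k ≠ j} (-cₖ/cⱼ) Lₖ/Lⱼ`. Multiplying `1/∏ Lᵢ^{sᵢ}` by this identity
rewrites it as a combination of fractions in which the exponent of `Lⱼ` goes up by one and that
of some `Lₖ` goes down by one. Taking `j` to be the smallest index in the relation, the weight
`∑ sᵢ·i` strictly decreases, so iterating ends with denominators whose forms are independent.
-/

theorem Fintype.prod_pow_add_single {M ι : Type*} [CommMonoid M] [Fintype ι] [DecidableEq ι]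
    (a : ι → M) (s : ι → ℕ) (k : ι) :
    ∏ i, a i ^ (s + Pi.single k 1 : ι → ℕ) i = (∏ i, a i ^ s i) * a k := by
  simp only [Pi.add_apply, pow_add, prod_mul_distrib, Pi.single_apply, pow_ite, pow_one, pow_zero,
    Fintype.prod_ite_eq']

theorem sum_erase_neg_div_mul_div_eq_one {K ι : Type*} [Field K] [DecidableEq ι]
    {S : Finset ι} {c y : ι → K} {j : ι} (h : ∑ k ∈ S, c k * y k = 0) (hj : j ∈ S)
    (hc : c j ≠ 0) (hy : y j ≠ 0) :
    ∑ k ∈ S.erase j, -c k / c j * (y k / y j) = 1 := by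
  rw [← add_sum_erase S _ hj, add_eq_zero_iff_eq_neg'] at h
  calc ∑ k ∈ S.erase j, -c k / c j * (y k / y j)
      = -(∑ k ∈ S.erase j, c k * y k) / (c j * y j) := by
        rw [neg_div, sum_div, ← sum_neg_distrib]
        exact sum_congr rfl fun k _ => by field_simp
    _ = 1 := by rw [h, neg_neg, div_self (mul_ne_zero hc hy)]

theorem add_single_sub_single_add_single {n : ℕ} {s : Fin n → ℕ} (j : Fin n) {k : Fin n}
    (h : s k ≠ 0) :
    s + Pi.single j 1 - Pi.single k 1 + Pi.single k 1 = s + Pi.single j 1 := by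
  refine tsub_add_cancel_of_le fun i => ?_
  by_cases hi : i = k
  · subst hi; simp only [Pi.single_eq_same, Pi.add_apply]; omega
  · simp [hi]

def indexWeight {n : ℕ} (s : Fin n → ℕ) : ℕ := ∑ i, s i * i

theorem indexWeight_add {n : ℕ} (s t : Fin n → ℕ) :
    indexWeight (s + t) = indexWeight s + indexWeight t := by
  simp only [indexWeight, Pi.add_apply, add_mul, sum_add_distrib]

theorem indexWeight_single {n : ℕ} (k : Fin n) : indexWeight (Pi.single k 1) = k := by
  simp [indexWeight, Pi.single_apply]

section

variable {𝔽 V : Type*} [Field 𝔽] [AddCommGroup V] [Module 𝔽 V] {n : ℕ}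
  (L : Fin n → V →ₗ[𝔽] 𝔽)

/-- Functions on the complement of the hyperplanes `Lᵢ = 0` form an `𝔽`-vector space, in which
the theorem becomes a statement about a span. -/
def invMonomial (s : Fin n → ℕ) : {x : V // ∀ i, L i x ≠ 0} → 𝔽 :=
  fun x => (∏ i, L i x ^ s i)⁻¹

variable {L}

theorem invMonomial_eq_div_mul {s s' : Fin n → ℕ} {j k : Fin n}
    (h : s' + Pi.single k 1 = s + Pi.single j 1) (x : {x : V // ∀ i, L i x ≠ 0}) :
    invMonomial L s' x = L k x / L j x * invMonomial L s x := by
  have hprod := congrArg (fun u => ∏ i, L i x ^ u i) h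
  simp only [Fintype.prod_pow_add_single] at hprod
  have hne : ∀ t : Fin n → ℕ, ∏ i, L i x ^ t i ≠ 0 := fun t =>
    prod_ne_zero_iff.mpr fun i _ => pow_ne_zero _ (x.2 i)
  have hj := x.2 j
  unfold invMonomial
  field_simp [hne]
  linear_combination -hprod

theorem invMonomial_eq_sum_of_relation {s : Fin n → ℕ} {l : Fin n →₀ 𝔽}
    (hl : l ∈ Finsupp.supported 𝔽 𝔽 {i | s i ≠ 0}) (hrel : Finsupp.linearCombination 𝔽 L l = 0)
    {j : Fin n} (hj : j ∈ l.support) :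
    invMonomial L s = ∑ k ∈ l.support.erase j,
      (-l k / l j) • invMonomial L (s + Pi.single j 1 - Pi.single k 1) := by
  funext x
  have hrel_x : ∑ k ∈ l.support, l k * L k x = 0 := by
    simpa [Finsupp.linearCombination_apply, Finsupp.sum] using congrArg (fun φ => φ x) hrel
  have hs : ∀ k ∈ l.support, s k ≠ 0 := fun k hk => Finsupp.mem_supported _ _ |>.mp hl hk
  simp only [Finset.sum_apply, Pi.smul_apply, smul_eq_mul]
  calc invMonomial L s x
      = (∑ k ∈ l.support.erase j, -l k / l j * (L k x / L j x)) * invMonomial L s x := by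
        rw [sum_erase_neg_div_mul_div_eq_one hrel_x hj (Finsupp.mem_support_iff.mp hj) (x.2 j),
          one_mul]
    _ = _ := by
        rw [sum_mul]
        refine sum_congr rfl fun k hk => ?_
        rw [invMonomial_eq_div_mul (add_single_sub_single_add_single j (hs k (mem_of_mem_erase hk)))]
        ring

variable (L) in
theorem invMonomial_mem_span_linearIndepOn (s : Fin n → ℕ) :
    invMonomial L s ∈
      Submodule.span 𝔽 (invMonomial L '' {t | LinearIndepOn 𝔽 L {i | t i ≠ 0}}) := by
  induction hw : indexWeight s using Nat.strong_induction_on generalizing s with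
  | _ w ih =>
  by_cases hind : LinearIndepOn 𝔽 L {i | s i ≠ 0}
  · exact Submodule.subset_span ⟨s, hind, rfl⟩
  obtain ⟨l, hl, hrel, hl0⟩ : ∃ l ∈ Finsupp.supported 𝔽 𝔽 {i | s i ≠ 0},
      Finsupp.linearCombination 𝔽 L l = 0 ∧ l ≠ 0 := by
    simpa [linearIndepOn_iff] using hind
  obtain ⟨j, hj, hj_min⟩ : ∃ j ∈ l.support, ∀ k ∈ l.support, j ≤ k :=
    ⟨_, min'_mem _ (Finsupp.support_nonempty_iff.mpr hl0), fun k hk => min'_le _ k hk⟩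
  rw [invMonomial_eq_sum_of_relation hl hrel hj]
  refine Submodule.sum_mem _ fun k hk => Submodule.smul_mem _ _ (ih _ ?_ _ rfl)
  have hjk : j < k := (hj_min k (mem_of_mem_erase hk)).lt_of_ne (ne_of_mem_erase hk).symm
  have hsk : s k ≠ 0 := Finsupp.mem_supported _ _ |>.mp hl (mem_of_mem_erase hk)
  have hweight := congrArg indexWeight (add_single_sub_single_add_single j hsk)
  rw [indexWeight_add, indexWeight_add, indexWeight_single, indexWeight_single] at hweight
  rw [Fin.lt_def] at hjk
  omega

theorem exists_fin_family_of_linearIndepOn {t : Fin n → ℕ}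
    (ht : LinearIndepOn 𝔽 L {i | t i ≠ 0}) :
    ∃ (m : ℕ) (M : Fin m → Fin n) (u : Fin m → ℕ), LinearIndependent 𝔽 (fun j => L (M j)) ∧
      (∀ j, 1 ≤ u j) ∧ ∀ x : V, ∏ j, L (M j) x ^ u j = ∏ i, L i x ^ t i := by
  let e := (Fintype.equivFin {i // t i ≠ 0}).symm
  refine ⟨_, fun j => e j, fun j => t (e j), ht.comp e e.injective,
    fun j => Nat.one_le_iff_ne_zero.mpr (e j).2, fun x => ?_⟩
  rw [e.prod_comp (fun i => L i x ^ t i),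
    ← prod_subtype (univ.filter fun i => t i ≠ 0) (by simp) (fun i => L i x ^ t i),
    prod_filter_of_ne fun i _ h => by contrapose! h; simp [h]]

end

theorem stmt2_general {𝔽 : Type*} [Field 𝔽]
    {V : Type*} [AddCommGroup V] [Module 𝔽 V]
    (n : ℕ) (L : Fin n → (V →ₗ[𝔽] 𝔽))
    (s : Fin n → ℕ) :
    ∃ (N : ℕ) (a : Fin N → 𝔽) (m : Fin N → ℕ)
      (M : (i : Fin N) → Fin (m i) → Fin n)
      (t : (i : Fin N) → Fin (m i) → ℕ),
      (∀ i, LinearIndependent 𝔽 (fun j => L (M i j))) ∧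
      (∀ i j, 1 ≤ t i j) ∧
      ∀ x : V, (∀ i, L i x ≠ 0) →
        (∏ i, (L i x) ^ s i)⁻¹ = ∑ i, a i / ∏ j, (L (M i j) x) ^ t i j := by
  obtain ⟨N, a, g, hg⟩ := Submodule.mem_span_set'.mp (invMonomial_mem_span_linearIndepOn L s)
  choose t ht hgt using fun i => (g i).2
  choose m M u hM hu hprod using fun i => exists_fin_family_of_linearIndepOn (ht i)
  refine ⟨N, a, m, M, u, hM, hu, fun x hx => ?_⟩
  have hx := congrFun hg ⟨x, hx⟩
  simp only [Finset.sum_apply, Pi.smul_apply, smul_eq_mul, ← hgt, invMonomial] at hx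
  simpa only [hprod, div_eq_mul_inv] using hx.symm

/-- Any fraction `1/(L_1^{s_1} ⋯ L_n^{s_n})` with `L_1,…,L_n` nonzero linear forms on an
`𝔽`-vector space (`𝔽` a subfield of `ℝ`, encoded as a field together with an embedding
into `ℝ`) and positive exponents can be rewritten as a finite `𝔽`-linear combination
`Σ_i a_i / (M_{i1}^{t_{i1}} ⋯ M_{in_i}^{t_{in_i}})` where each `{M_{i1},…,M_{in_i}}` is a
linearly independent subfamily of `{L_1,…,L_n}` and the `t_{ij}` are positive integers. -/
theorem stmt2 {𝔽 : Type*} [Field 𝔽] [Algebra 𝔽 ℝ]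
    {V : Type*} [AddCommGroup V] [Module 𝔽 V]
    (n : ℕ) (L : Fin n → (V →ₗ[𝔽] 𝔽)) (hL : ∀ i, L i ≠ 0)
    (s : Fin n → ℕ) (hs : ∀ i, 1 ≤ s i) :
    ∃ (N : ℕ) (a : Fin N → 𝔽) (m : Fin N → ℕ)
      (M : (i : Fin N) → Fin (m i) → Fin n)
      (t : (i : Fin N) → Fin (m i) → ℕ),
      (∀ i, LinearIndependent 𝔽 (fun j => L (M i j))) ∧
      (∀ i j, 1 ≤ t i j) ∧
      ∀ x : V, (∀ i, L i x ≠ 0) →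
        (∏ i, (L i x) ^ s i)⁻¹ = ∑ i, a i / ∏ j, (L (M i j) x) ^ t i j :=
  stmt2_general n L s
end

section
/- Let f be a meromorphic germ at zero with linear poles of the form f = h(L_1, ℓ_1, ..., ℓ_{k-1})/L_1, where h is holomorphic at zero and {L_1, ℓ_1, ..., ℓ_{k-1}} is a basis of ℝ^k with Q(L_1, ℓ_j) = 0 for all j. Then f = h(0, ℓ_1, ..., ℓ_{k-1})/L_1 + g, where g is holomorphic at zero and h(0, ℓ_1, ..., ℓ_{k-1})/L_1 is a polar germ. -/
/-!
Write `h = ∑ pₙ` near `0` and let `σ z = z - ℓ z • e`. Telescoping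
`pₙ (z,…,z) - pₙ (σz,…,σz)` slot by slot, each step changes one slot by `z - σ z = ℓ z • e`,
so the difference is `ℓ z` times a sum of `n` multilinear terms of degree `n - 1`, each of norm
at most `‖pₙ‖ ‖e‖ (1 + ‖σ‖)ⁿ⁻¹`. These quotients still form a series of positive radius, whose
sum `G` is analytic with `h z - h (σ z) = ℓ z • G z`. Taking `ℓ` the first coordinate of
`ℂ^{k+1}` and composing with the linear map `x ↦ (L₁ x, ℓ₁ x, …, ℓ_k x)` gives `g`; the polar
part is the polar germ with the single simple pole `L₁`.
-/

open Complex Filter Finset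

noncomputable section

/-- Pairing of a real vector (regarded as a real linear form via the standard
inner product) with a complex vector in `ℂ^k`. -/
def pairC {k : ℕ} (v : Fin k → ℝ) (x : Fin k → ℂ) : ℂ := ∑ i, (v i : ℂ) * x i

/-- A polar germ at zero on `ℂ^k` (with respect to the standard inner product on `ℝ^k`):
a germ of the form `h(ℓ_1,…,ℓ_m) / (L_1^{s_1} ⋯ L_p^{s_p})` with `h` holomorphic at `0`,
`L_1,…,L_p` linearly independent real linear forms, `ℓ_1,…,ℓ_m` linearly independent real
linear forms orthogonal to all the `L_j`, and exponents `s_j ≥ 1`. -/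
structure PolarGerm (k : ℕ) where
  m : ℕ
  p : ℕ
  num : (Fin m → ℂ) → ℂ
  num_analytic : AnalyticAt ℂ num 0
  ell : Fin m → Fin k → ℝ
  L : Fin p → Fin k → ℝ
  s : Fin p → ℕ
  s_pos : ∀ j, 1 ≤ s j
  ell_indep : LinearIndependent ℝ ell
  L_indep : LinearIndependent ℝ L
  orth : ∀ i j, ∑ t, ell i t * L j t = 0

/-- Evaluation of a polar germ. -/
def PolarGerm.eval {k : ℕ} (S : PolarGerm k) (x : Fin k → ℂ) : ℂ :=
  S.num (fun i => pairC (S.ell i) x) / ∏ j, (pairC (S.L j) x) ^ S.s j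

/-- The set where the denominator of a polar germ does not vanish. -/
def PolarGerm.Dom {k : ℕ} (S : PolarGerm k) (x : Fin k → ℂ) : Prop :=
  ∀ j, pairC (S.L j) x ≠ 0

/-- The supporting cone of a polar germ: the convex cone generated by `L_1,…,L_p`. -/
def PolarGerm.cone {k : ℕ} (S : PolarGerm k) : Set (Fin k → ℝ) :=
  {v | ∃ c : Fin S.p → ℝ, (∀ j, 0 ≤ c j) ∧ v = ∑ j, c j • S.L j}

/-- The polar order (p-order) of a polar germ: the sum of the exponents. -/
def PolarGerm.pord {k : ℕ} (S : PolarGerm k) : ℕ := ∑ j, S.s j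

/-- The polar germ with its holomorphic numerator evaluated at zero: `S(0_ℓ)`. -/
def PolarGerm.eval0 {k : ℕ} (S : PolarGerm k) (x : Fin k → ℂ) : ℂ :=
  S.num 0 / ∏ j, (pairC (S.L j) x) ^ S.s j

/-- `F` is a face of the convex cone `C`. -/
def IsFaceOf {k : ℕ} (F C : Set (Fin k → ℝ)) : Prop :=
  F ⊆ C ∧ ∀ x ∈ C, ∀ y ∈ C, x + y ∈ F → x ∈ F ∧ y ∈ F

/-- The convex cone generated by a finite family of vectors. -/
def coneOf {k p : ℕ} (L : Fin p → Fin k → ℝ) : Set (Fin k → ℝ) :=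
  {v | ∃ c : Fin p → ℝ, (∀ j, 0 ≤ c j) ∧ v = ∑ j, c j • L j}

open Topology

namespace FormalMultilinearSeries

variable {𝕜 E F : Type*} [NontriviallyNormedField 𝕜] [NormedAddCommGroup E] [NormedSpace 𝕜 E]
  [NormedAddCommGroup F] [NormedSpace 𝕜 F]

def slopeTerm (p : FormalMultilinearSeries 𝕜 E F) (σ : E →L[𝕜] E) (e : E) (m : ℕ)
    (i : Fin (m + 1)) : E [×m]→L[𝕜] F :=
  ((p (m + 1)).curryMid i e).compContinuousLinearMap
    fun j => if i.succAbove j < i then .id 𝕜 E else σ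

def slopeSeries (p : FormalMultilinearSeries 𝕜 E F) (σ : E →L[𝕜] E) (e : E) :
    FormalMultilinearSeries 𝕜 E F :=
  fun m => ∑ i, p.slopeTerm σ e m i

theorem slopeTerm_apply_const (p : FormalMultilinearSeries 𝕜 E F) (σ : E →L[𝕜] E) (e z : E)
    (m : ℕ) (i : Fin (m + 1)) :
    p.slopeTerm σ e m i (fun _ => z) =
      p (m + 1) (fun j => if j < i then z else if j = i then e else σ z) := by
  simp only [slopeTerm, ContinuousMultilinearMap.compContinuousLinearMap_apply,
    ContinuousMultilinearMap.curryMid_apply]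
  congr 1
  ext j
  rcases Fin.eq_self_or_eq_succAbove i j with rfl | ⟨j, rfl⟩
  · simp
  · by_cases h : i.succAbove j < i <;> simp [h, Fin.succAbove_ne i j]

theorem norm_slopeTerm_le (p : FormalMultilinearSeries 𝕜 E F) (σ : E →L[𝕜] E) (e : E) (m : ℕ)
    (i : Fin (m + 1)) : ‖p.slopeTerm σ e m i‖ ≤ ‖p (m + 1)‖ * ‖e‖ * (1 + ‖σ‖) ^ m := by
  have hτ : ∀ j : Fin m, ‖if i.succAbove j < i then .id 𝕜 E else σ‖ ≤ 1 + ‖σ‖ := fun j => by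
    split_ifs
    · linarith [ContinuousLinearMap.norm_id_le (𝕜 := 𝕜) (E := E), norm_nonneg σ]
    · linarith
  calc ‖p.slopeTerm σ e m i‖
      ≤ ‖(p (m + 1)).curryMid i e‖ * ∏ j : Fin m, (1 + ‖σ‖) :=
        (ContinuousMultilinearMap.norm_compContinuousLinearMap_le _ _).trans <|
          mul_le_mul_of_nonneg_left (prod_le_prod (fun _ _ => norm_nonneg _) fun j _ => hτ j)
            (norm_nonneg _)
    _ ≤ ‖p (m + 1)‖ * ‖e‖ * (1 + ‖σ‖) ^ m := by
        rw [prod_const, card_univ, Fintype.card_fin]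
        gcongr
        simpa using ((p (m + 1)).curryMid i).le_opNorm e

theorem norm_slopeSeries_le (p : FormalMultilinearSeries 𝕜 E F) (σ : E →L[𝕜] E) (e : E)
    (m : ℕ) : ‖p.slopeSeries σ e m‖ ≤ (m + 1) * (‖p (m + 1)‖ * ‖e‖ * (1 + ‖σ‖) ^ m) :=
  (norm_sum_le _ _).trans <| by
    simpa using sum_le_sum fun i (_ : i ∈ univ) => p.norm_slopeTerm_le σ e m i

theorem sub_eq_smul_slopeSeries (p : FormalMultilinearSeries 𝕜 E F) (σ : E →L[𝕜] E)
    {e z : E} {c : 𝕜} (hz : z - σ z = c • e) (m : ℕ) :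
    p (m + 1) (fun _ => z) - p (m + 1) (fun _ => σ z) =
      c • p.slopeSeries σ e m (fun _ => z) := by
  have htel := (p (m + 1)).toMultilinearMap.map_sub_map_piecewise
    (fun _ => z) (fun _ => σ z) univ
  simp only [piecewise_univ, mem_univ, true_imp_iff, ContinuousMultilinearMap.coe_coe] at htel
  rw [htel, slopeSeries, _root_.sum_apply, smul_sum]
  refine sum_congr rfl fun i _ => ?_
  have hupd : (fun j => if j < i then z else if i = j then z - σ z else σ z) =
      Function.update (fun j => if j < i then z else if j = i then e else σ z) i (c • e) := by
    ext j
    rcases eq_or_ne j i with rfl | hj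
    · simp [hz]
    · simp [hj, Ne.symm hj]
  rw [hupd, ContinuousMultilinearMap.map_update_smul, slopeTerm_apply_const]
  congr 2
  exact Function.update_eq_self_iff.2 (by simp)

theorem radius_pos_of_norm_le_succ_mul {G : Type*} [NormedAddCommGroup G] [NormedSpace 𝕜 G]
    {p : FormalMultilinearSeries 𝕜 E F} {q : FormalMultilinearSeries 𝕜 E G} (hp : 0 < p.radius)
    {C : ℝ} (hC : 0 ≤ C) {A : NNReal} (hA : 0 < A)
    (hq : ∀ m, ‖q m‖ ≤ (m + 1) * (‖p (m + 1)‖ * C * A ^ m)) : 0 < q.radius := by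
  obtain ⟨r, hr0, hrp⟩ := ENNReal.lt_iff_exists_nnreal_btwn.1 hp
  have hr : (0 : ℝ) < r := by exact_mod_cast hr0
  obtain ⟨K, -, hK⟩ := p.norm_mul_pow_le_of_lt_radius hrp
  -- at radius `r / (2A)` the factor `A ^ m` cancels and `(m + 1) / 2 ^ m ≤ 2` absorbs the weight
  have hbound : ∀ m, ‖q m‖ * ((r / (2 * A) : NNReal) : ℝ) ^ m ≤ C * 2 * (K / r) := fun m => by
    have hsucc : ((m : ℝ) + 1) / 2 ^ m ≤ 2 := by
      rw [div_le_iff₀ (by positivity)]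
      have : m + 1 < 2 ^ (m + 1) := Nat.lt_two_pow_self
      calc (m : ℝ) + 1 ≤ 2 ^ (m + 1) := by exact_mod_cast this.le
        _ = 2 * 2 ^ m := pow_succ' 2 m
    have hpr : ‖p (m + 1)‖ * (r : ℝ) ^ m ≤ K / r := by
      rw [le_div_iff₀ hr, mul_assoc, ← pow_succ]
      exact hK (m + 1)
    calc ‖q m‖ * ((r / (2 * A) : NNReal) : ℝ) ^ m
        ≤ (m + 1) * (‖p (m + 1)‖ * C * A ^ m) * ((r / (2 * A) : NNReal) : ℝ) ^ m := by
          gcongr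
          exact hq m
      _ = C * (((m : ℝ) + 1) / 2 ^ m) * (‖p (m + 1)‖ * (r : ℝ) ^ m) := by
          have : (A : ℝ) ≠ 0 := by exact_mod_cast hA.ne'
          push_cast
          rw [div_pow, mul_pow]
          field_simp
      _ ≤ C * 2 * (K / r) := by gcongr
  calc (0 : ENNReal) < (r / (2 * A) : NNReal) :=
        ENNReal.coe_pos.2 (div_pos (ENNReal.coe_pos.1 hr0) (mul_pos two_pos hA))
    _ ≤ q.radius := q.le_radius_of_bound _ hbound

end FormalMultilinearSeries

theorem AnalyticAt.exists_analyticAt_sub_eq_smul {𝕜 E F : Type*} [NontriviallyNormedField 𝕜]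
    [NormedAddCommGroup E] [NormedSpace 𝕜 E] [NormedAddCommGroup F] [NormedSpace 𝕜 F]
    [CompleteSpace F] {h : E → F} (hh : AnalyticAt 𝕜 h 0) (ℓ : E →L[𝕜] 𝕜) (e : E) :
    ∃ G : E → F, AnalyticAt 𝕜 G 0 ∧ ∀ᶠ z in 𝓝 0, h z - h (z - ℓ z • e) = ℓ z • G z := by
  obtain ⟨p, hp⟩ := hh
  set σ := ContinuousLinearMap.id 𝕜 E - ℓ.smulRight e
  have hσ : ∀ z, σ z = z - ℓ z • e := fun z => by simp [σ]
  set q := p.slopeSeries σ e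
  have hq_radius : 0 < q.radius :=
    FormalMultilinearSeries.radius_pos_of_norm_le_succ_mul hp.radius_pos (norm_nonneg e)
      (A := 1 + ‖σ‖₊) (by positivity) fun m => by simpa using p.norm_slopeSeries_le σ e m
  have hq : HasFPowerSeriesAt q.sum q 0 := (q.hasFPowerSeriesOnBall hq_radius).hasFPowerSeriesAt
  refine ⟨q.sum, hq.analyticAt, ?_⟩
  have hσ0 : Tendsto σ (𝓝 0) (𝓝 0) := by simpa using σ.continuous.tendsto 0
  filter_upwards [hp.eventually_hasSum, hσ0.eventually hp.eventually_hasSum,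
    hq.eventually_hasSum] with z hz hσz hqz
  simp only [zero_add] at hz hσz hqz
  have hsucc : HasSum (fun m => p (m + 1) (fun _ => z) - p (m + 1) (fun _ => σ z))
      (ℓ z • q.sum z) := by
    convert hqz.const_smul (ℓ z) using 2 with m
    exact p.sub_eq_smul_slopeSeries σ (by rw [hσ, sub_sub_cancel]) m
  have hzero : p 0 (fun _ => z) - p 0 (fun _ => σ z) = 0 := by
    rw [Subsingleton.elim (fun _ : Fin 0 => z) (fun _ => σ z), sub_self]
  rw [← hσ]
  simpa [hzero] using (hz.sub hσz).unique hsucc.zero_add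

theorem analyticAt_pairC {k : ℕ} (v : Fin k → ℝ) (x : Fin k → ℂ) :
    AnalyticAt ℂ (pairC v) x :=
  Finset.analyticAt_fun_sum _ fun i _ =>
    analyticAt_const.mul ((ContinuousLinearMap.proj (R := ℂ) (φ := fun _ => ℂ) i).analyticAt x)

theorem AnalyticAt.finCons {𝕜 E F : Type*} [NontriviallyNormedField 𝕜] [NormedAddCommGroup E]
    [NormedSpace 𝕜 E] [NormedAddCommGroup F] [NormedSpace 𝕜 F] {n : ℕ} {f : E → F}
    {g : E → Fin n → F} {x : E} (hf : AnalyticAt 𝕜 f x) (hg : AnalyticAt 𝕜 g x) :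
    AnalyticAt 𝕜 (fun y => (Fin.cons (f y) (g y) : Fin (n + 1) → F)) x := by
  rw [analyticAt_pi_iff] at hg ⊢
  intro i
  cases i using Fin.cases with
  | zero => simpa using hf
  | succ j => simpa using hg j

theorem Fin.cons_sub_smul_single_zero {R : Type*} [Ring R] {n : ℕ} (a : R) (v : Fin n → R) :
    (Fin.cons a v : Fin (n + 1) → R) - a • Pi.single 0 1 = Fin.cons 0 v := by
  ext i
  cases i using Fin.cases with
  | zero => simp
  | succ j => simp

theorem PolarGerm.exists_eval_eq_div {k m : ℕ} {num : (Fin m → ℂ) → ℂ}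
    (hnum : AnalyticAt ℂ num 0) {L : Fin k → ℝ} (hL : L ≠ 0) {ell : Fin m → Fin k → ℝ}
    (hell : LinearIndependent ℝ ell) (horth : ∀ j, ∑ t, L t * ell j t = 0) :
    ∃ S : PolarGerm k, ∀ x, S.eval x = num (fun j => pairC (ell j) x) / pairC L x :=
  ⟨{ m := m, p := 1, num := num, num_analytic := hnum, ell := ell, L := ![L], s := fun _ => 1,
      s_pos := fun _ => le_rfl, ell_indep := hell,
      L_indep := linearIndependent_unique_iff.2 hL,
      orth := fun i j => by simpa [mul_comm] using horth i },
    fun x => by simp [PolarGerm.eval]⟩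

theorem stmt5_general (k : ℕ)
    (h : (Fin (k + 1) → ℂ) → ℂ) (hh : AnalyticAt ℂ h 0)
    (L1 : Fin (k + 1) → ℝ) (ell : Fin k → Fin (k + 1) → ℝ)
    (hbasis : LinearIndependent ℝ (Fin.cons L1 ell : Fin (k + 1) → Fin (k + 1) → ℝ))
    (horth : ∀ j, ∑ t, L1 t * ell j t = 0) :
    ∃ (g : (Fin (k + 1) → ℂ) → ℂ) (S : PolarGerm (k + 1)),
      AnalyticAt ℂ g 0 ∧
      (∀ᶠ x in nhds (0 : Fin (k + 1) → ℂ), pairC L1 x ≠ 0 →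
        h (Fin.cons (pairC L1 x) fun j => pairC (ell j) x) / pairC L1 x
          = h (Fin.cons 0 fun j => pairC (ell j) x) / pairC L1 x + g x) ∧
      (∀ x : Fin (k + 1) → ℂ, pairC L1 x ≠ 0 →
        S.eval x = h (Fin.cons 0 fun j => pairC (ell j) x) / pairC L1 x) := by
  set Λ : (Fin (k + 1) → ℂ) → Fin (k + 1) → ℂ :=
    fun x => Fin.cons (pairC L1 x) fun j => pairC (ell j) x
  have hΛ : AnalyticAt ℂ Λ 0 :=
    (analyticAt_pairC L1 0).finCons (analyticAt_pi_iff.2 fun j => analyticAt_pairC (ell j) 0)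
  have hΛ0 : Λ 0 = 0 := by
    ext i
    cases i using Fin.cases <;> simp [Λ, pairC]
  obtain ⟨G, hG, hGeq⟩ := hh.exists_analyticAt_sub_eq_smul (.proj 0) (Pi.single 0 1)
  obtain ⟨S, hS⟩ := PolarGerm.exists_eval_eq_div (num := fun w => h (Fin.cons 0 w))
    (hh.comp_of_eq (analyticAt_const.finCons analyticAt_id) Matrix.cons_zero_zero)
    (by simpa using hbasis.ne_zero 0)
    (by simpa [Function.comp_def] using hbasis.comp Fin.succ (Fin.succ_injective _)) horth
  refine ⟨G ∘ Λ, S, hG.comp_of_eq hΛ hΛ0, ?_, fun x _ => hS x⟩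
  filter_upwards [(hΛ0 ▸ hΛ.continuousAt.tendsto).eventually hGeq] with x hx hx0
  simp only [Λ, ContinuousLinearMap.proj_apply, Fin.cons_zero, Fin.cons_sub_smul_single_zero,
    smul_eq_mul] at hx
  field_simp
  simp only [Function.comp_apply, Λ]
  linear_combination hx

/-- Base case of the decomposition into polar germs: if `f = h(L₁, ℓ₁, …, ℓ_{k})/L₁` with
`h` holomorphic at zero and `{L₁, ℓ₁, …, ℓ_k}` a basis of `ℝ^{k+1}` with `Q(L₁, ℓ_j) = 0`
for all `j`, then `f = h(0, ℓ₁, …, ℓ_k)/L₁ + g` with `g` holomorphic at zero, and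
`h(0, ℓ₁, …, ℓ_k)/L₁` is a polar germ. -/
theorem stmt5 (k : ℕ)
    (h : (Fin (k + 1) → ℂ) → ℂ) (hh : AnalyticAt ℂ h 0)
    (L1 : Fin (k + 1) → ℝ) (ell : Fin k → Fin (k + 1) → ℝ)
    (hbasis : LinearIndependent ℝ (Fin.cons L1 ell : Fin (k + 1) → Fin (k + 1) → ℝ))
    (hspan : Submodule.span ℝ (Set.range (Fin.cons L1 ell : Fin (k + 1) → Fin (k + 1) → ℝ)) = ⊤)
    (horth : ∀ j, ∑ t, L1 t * ell j t = 0) :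
    ∃ (g : (Fin (k + 1) → ℂ) → ℂ) (S : PolarGerm (k + 1)),
      AnalyticAt ℂ g 0 ∧
      (∀ᶠ x in nhds (0 : Fin (k + 1) → ℂ), pairC L1 x ≠ 0 →
        h (Fin.cons (pairC L1 x) fun j => pairC (ell j) x) / pairC L1 x
          = h (Fin.cons 0 fun j => pairC (ell j) x) / pairC L1 x + g x) ∧
      (∀ x : Fin (k + 1) → ℂ, pairC L1 x ≠ 0 →
        S.eval x = h (Fin.cons 0 fun j => pairC (ell j) x) / pairC L1 x) :=
  stmt5_general k h hh L1 ell hbasis horth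

end
end

section
/- Any finite family of polar germs admits a choice of supporting cones whose union contains no nonzero linear subspace. Specifically, after replacing each linear form L in a denominator by ±L so that its last nonzero coordinate (in a fixed ordered basis) is positive, all supporting cones lie in the strictly convex set of pseudo-positive vectors, hence their union contains no nonzero linear subspace. -/
open Complex Filter Finset

noncomputable section

/-- A vector of `ℝ^k` is pseudo-positive (w.r.t. the standard ordered basis) if it is zero
or its last nonzero coordinate is positive. -/
def PseudoPos {k : ℕ} (v : Fin k → ℝ) : Prop :=
  v = 0 ∨ ∃ N : Fin k, 0 < v N ∧ ∀ m : Fin k, N < m → v m = 0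

/-! Pseudo-positivity is nonnegativity for the colexicographic order on `ℝ^k`, which is a linear
order compatible with addition. So the pseudo-positive vectors form a convex cone meeting its
negative only in `0`, and every vector is pseudo-positive up to sign. Flipping each `L_i` into
this cone puts every supporting cone inside it, and a subspace contained in it must be `0`. -/

instance Pi.Colex.isOrderedCancelAddMonoid {ι : Type*} [LinearOrder ι] {α : ι → Type*}
    [∀ i, AddCommMonoid (α i)] [∀ i, PartialOrder (α i)] [∀ i, IsOrderedCancelAddMonoid (α i)] :
    IsOrderedCancelAddMonoid (Colex (∀ i, α i)) :=
  inferInstanceAs (IsOrderedCancelAddMonoid (Lex (∀ i : ιᵒᵈ, α (OrderDual.ofDual i))))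

namespace PseudoPos

variable {k : ℕ} {v w : Fin k → ℝ}

theorem iff_nonneg_toColex : PseudoPos v ↔ 0 ≤ toColex v := by
  rw [le_iff_eq_or_lt, eq_comm, ← toColex_zero, toColex_inj]
  exact or_congr Iff.rfl ⟨fun ⟨N, hN, hlast⟩ => ⟨N, fun m hm => (hlast m hm).symm, hN⟩,
    fun ⟨N, hlast, hN⟩ => ⟨N, hN, fun m hm => (hlast m hm).symm⟩⟩

theorem add (hv : PseudoPos v) (hw : PseudoPos w) : PseudoPos (v + w) := by
  rw [iff_nonneg_toColex] at *
  exact add_nonneg hv hw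

theorem smul (hv : PseudoPos v) {c : ℝ} (hc : 0 ≤ c) : PseudoPos (c • v) := by
  rcases hc.eq_or_lt with rfl | hc
  · exact Or.inl (zero_smul ℝ v)
  rcases hv with rfl | ⟨N, hN, hlast⟩
  · exact Or.inl (smul_zero c)
  · exact Or.inr ⟨N, mul_pos hc hN, fun m hm => by simp [hlast m hm]⟩

theorem or_neg (v : Fin k → ℝ) : PseudoPos v ∨ PseudoPos (-v) := by
  simp only [iff_nonneg_toColex]
  exact (le_total 0 (toColex v)).imp id neg_nonneg.mpr

theorem eq_zero_of_neg (hv : PseudoPos v) (hnv : PseudoPos (-v)) : v = 0 := by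
  rw [iff_nonneg_toColex] at hv hnv
  exact toColex_inj.mp (le_antisymm (neg_nonneg.mp hnv) hv)

theorem exists_sign_smul (v : Fin k → ℝ) :
    ∃ ε : ℝ, (ε = 1 ∨ ε = -1) ∧ PseudoPos (ε • v) := by
  rcases or_neg v with hv | hnv
  · exact ⟨1, Or.inl rfl, by rwa [one_smul]⟩
  · exact ⟨-1, Or.inr rfl, by rwa [neg_one_smul]⟩

end PseudoPos

theorem coneOf_subset_setOf_pseudoPos {k p : ℕ} {L : Fin p → Fin k → ℝ}
    (hL : ∀ i, PseudoPos (L i)) : coneOf L ⊆ {v | PseudoPos v} := by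
  rintro _ ⟨c, hc, rfl⟩
  exact Finset.sum_induction _ PseudoPos (fun _ _ => PseudoPos.add) (Or.inl rfl)
    fun i _ => (hL i).smul (hc i)

theorem Submodule.eq_bot_of_subset_setOf_pseudoPos {k : ℕ} {W : Submodule ℝ (Fin k → ℝ)}
    (hW : (W : Set (Fin k → ℝ)) ⊆ {v | PseudoPos v}) : W = ⊥ :=
  (Submodule.eq_bot_iff W).mpr fun _ hv => (hW hv).eq_zero_of_neg (hW (W.neg_mem hv))

/-- Any finite family of polar germs admits a choice of signs `±1` for the linear forms in
the denominators making all of them pseudo-positive, so that all the resulting supporting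
cones lie in the strictly convex set of pseudo-positive vectors; in particular the union
of the supporting cones contains no nonzero linear subspace. -/
theorem stmt11 (k N : ℕ) (S : Fin N → PolarGerm k) :
    ∃ ε : (j : Fin N) → Fin (S j).p → ℝ,
      (∀ j i, ε j i = 1 ∨ ε j i = -1) ∧
      (∀ j i, PseudoPos (ε j i • (S j).L i)) ∧
      ∀ W : Submodule ℝ (Fin k → ℝ),
        (W : Set (Fin k → ℝ)) ⊆ (⋃ j, coneOf fun i => ε j i • (S j).L i) → W = ⊥ := by
  choose ε hsign hpos using fun j i => PseudoPos.exists_sign_smul ((S j).L i)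
  refine ⟨ε, hsign, hpos, fun W hW => Submodule.eq_bot_of_subset_setOf_pseudoPos ?_⟩
  exact hW.trans (Set.iUnion_subset fun j => coneOf_subset_setOf_pseudoPos (hpos j))

end
end
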